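/- arXiv:1504.04820 — 2 statements merged into one kernel-verified Lean document; each statement's English description precedes it below -/
import Mathlib

section
/- Let 𝒢 be a family of graphs of diameter two and order n ≥ 2 on a common vertex set. If 𝒢 contains a triangle-free graph, then n−2 ≤ Sd_s(𝒢) ≤ n−1. -/
open SimpleGraph

variable {V : Type*}

/-- `w` strongly resolves `u` and `v` in `G`. -/
def StronglyResolves (G : SimpleGraph V) (w u v : V) : Prop :=
  G.dist u w = G.dist u v + G.dist v w ∨ G.dist v w = G.dist v u + G.dist u w

/-- `S` is a strong metric generator for `G`. -/
def IsStrongMetricGen (G : SimpleGraph V) (S : Set V) : Prop :=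
  ∀ u v : V, u ≠ v → ∃ w ∈ S, StronglyResolves G w u v

/-- The simultaneous strong metric dimension of a family of graphs. -/
noncomputable def SdS (𝒢 : Set (SimpleGraph V)) : ℕ :=
  sInf {n | ∃ S : Set V, S.ncard = n ∧ ∀ G ∈ 𝒢, IsStrongMetricGen G S}

/-- The strong metric dimension of a single graph. -/
noncomputable def sdim (G : SimpleGraph V) : ℕ := SdS {G}

/-- `u` is maximally distant from `v` in `G`. -/
def MaxDistantFrom (G : SimpleGraph V) (u v : V) : Prop :=
  ∀ w : V, G.Adj u w → G.dist v w ≤ G.dist v u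

/-- `u` and `v` are mutually maximally distant in `G`. -/
def MutuallyMaxDistant (G : SimpleGraph V) (u v : V) : Prop :=
  MaxDistantFrom G u v ∧ MaxDistantFrom G v u

/-- The strong resolving graph of `G`. -/
def SRG (G : SimpleGraph V) : SimpleGraph V where
  Adj u v := u ≠ v ∧ MutuallyMaxDistant G u v
  symm := by
    constructor
    intro u v h
    exact ⟨h.1.symm, h.2.2, h.2.1⟩
  loopless := by constructor; intro u h; exact h.1 rfl

/-- The boundary of `G`: vertices mutually maximally distant from some vertex. -/
def Boundary (G : SimpleGraph V) : Set V :=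
  {u | ∃ v, MutuallyMaxDistant G u v}

/-- `S` is a vertex cover of `G`. -/
def IsVertexCover (G : SimpleGraph V) (S : Set V) : Prop :=
  ∀ u v : V, G.Adj u v → u ∈ S ∨ v ∈ S

/-- The vertex cover number. -/
noncomputable def vcNum (G : SimpleGraph V) : ℕ :=
  sInf {n | ∃ S : Set V, S.ncard = n ∧ _root_.IsVertexCover G S}

/-- A strong resolving cover: simultaneously a vertex cover and a strong metric generator. -/
def IsStrongResCover (G : SimpleGraph V) (S : Set V) : Prop :=
  _root_.IsVertexCover G S ∧ IsStrongMetricGen G S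

/-- The strong resolving cover number `β_s`. -/
noncomputable def betaS (G : SimpleGraph V) : ℕ :=
  sInf {n | ∃ S : Set V, S.ncard = n ∧ IsStrongResCover G S}

/-- `G` is 2-antipodal. -/
def TwoAntipodal (G : SimpleGraph V) : Prop :=
  ∀ x : V, ∃! y : V, G.dist x y = G.diam

/-- `v` is a leaf of `G` (degree one). -/
def IsLeaf (G : SimpleGraph V) (v : V) : Prop := ∃! w : V, G.Adj v w

/-!
Each of the two vertices `u`, `v` strongly resolves the pair, so every set missing at most one
vertex is a strong metric generator; this gives the upper bound. Conversely, in a graph of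
diameter two a vertex `w ∉ {u, v}` can strongly resolve `u` and `v` only if `u` and `v` are
adjacent (otherwise `d(u, w) = 2 + d(v, w) ≥ 3`). Hence the complement of a strong metric
generator is a clique, which has at most two vertices in a triangle-free member of the family.
-/

theorem SimpleGraph.IsClique.ncard_lt_of_cliqueFree [Finite V] {G : SimpleGraph V} {s : Set V}
    {n : ℕ} (hs : G.IsClique s) (hG : G.CliqueFree n) : s.ncard < n := by
  by_contra! hn
  obtain ⟨t, hts, rfl⟩ := Set.exists_subset_card_eq hn
  have ht : t.Finite := t.toFinite
  exact hG ht.toFinset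
    ⟨by simpa using hs.subset hts, by rw [Set.ncard_eq_toFinset_card t ht]⟩

namespace StronglyResolves

variable {G : SimpleGraph V} {w u v : V}

theorem self_left : StronglyResolves G u u v :=
  Or.inr (by simp)

theorem self_right : StronglyResolves G v u v :=
  Or.inl (by simp)

theorem adj_of_diam_eq_two (hd : G.diam = 2) (huv : u ≠ v) (hwu : w ≠ u) (hwv : w ≠ v)
    (h : StronglyResolves G w u v) : G.Adj u v := by
  have hfin : G.ediam ≠ ⊤ := ediam_ne_top_of_diam_ne_zero (by omega)
  have : Nonempty V := ⟨u⟩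
  have hconn : G.Connected := connected_of_ediam_ne_top hfin
  have huw : G.dist u w ≤ 2 := hd ▸ dist_le_diam hfin
  have hvw : G.dist v w ≤ 2 := hd ▸ dist_le_diam hfin
  have := hconn.pos_dist_of_ne huv
  have := hconn.pos_dist_of_ne hwu.symm
  have := hconn.pos_dist_of_ne hwv.symm
  have := G.dist_comm (u := u) (v := v)
  have := G.dist_comm (u := w) (v := u)
  have := G.dist_comm (u := w) (v := v)
  rw [← dist_eq_one_iff_adj]
  unfold StronglyResolves at h
  omega

end StronglyResolves

theorem isStrongMetricGen_univ (G : SimpleGraph V) : IsStrongMetricGen G Set.univ :=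
  fun u _ _ ↦ ⟨u, trivial, .self_left⟩

theorem isStrongMetricGen_compl_singleton (G : SimpleGraph V) (x : V) :
    IsStrongMetricGen G {x}ᶜ := by
  intro u v huv
  by_cases hu : u = x
  · exact ⟨v, by rintro rfl; exact huv hu, .self_right⟩
  · exact ⟨u, hu, .self_left⟩

theorem IsStrongMetricGen.isClique_compl {G : SimpleGraph V} {S : Set V} (hd : G.diam = 2)
    (hS : IsStrongMetricGen G S) : G.IsClique Sᶜ := by
  intro u hu v hv huv
  obtain ⟨w, hwS, hw⟩ := hS u v huv
  exact hw.adj_of_diam_eq_two hd huv (by rintro rfl; exact hu hwS) (by rintro rfl; exact hv hwS)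

theorem SdS_le_ncard {𝒢 : Set (SimpleGraph V)} {S : Set V}
    (hS : ∀ G ∈ 𝒢, IsStrongMetricGen G S) : SdS 𝒢 ≤ S.ncard :=
  Nat.sInf_le ⟨S, rfl, hS⟩

theorem le_SdS {𝒢 : Set (SimpleGraph V)} {m : ℕ}
    (h : ∀ S : Set V, (∀ G ∈ 𝒢, IsStrongMetricGen G S) → m ≤ S.ncard) : m ≤ SdS 𝒢 :=
  le_csInf ⟨_, Set.univ, rfl, fun G _ ↦ isStrongMetricGen_univ G⟩
    (by rintro _ ⟨S, rfl, hS⟩; exact h S hS)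

theorem SdS_le_card_sub_one [Finite V] (𝒢 : Set (SimpleGraph V)) :
    SdS 𝒢 ≤ Nat.card V - 1 := by
  cases isEmpty_or_nonempty V with
  | inl _ => simpa using SdS_le_ncard (𝒢 := 𝒢) (S := ∅) (fun G _ u ↦ isEmptyElim u)
  | inr hV =>
    obtain ⟨x⟩ := hV
    calc SdS 𝒢 ≤ ({x}ᶜ : Set V).ncard :=
          SdS_le_ncard fun G _ ↦ isStrongMetricGen_compl_singleton G x
      _ = Nat.card V - 1 := by rw [Set.ncard_compl, Set.ncard_singleton]

theorem card_sub_two_le_SdS [Finite V] {𝒢 : Set (SimpleGraph V)} {G : SimpleGraph V}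
    (hG : G ∈ 𝒢) (hd : G.diam = 2) (htf : G.CliqueFree 3) : Nat.card V - 2 ≤ SdS 𝒢 := by
  refine le_SdS fun S hS ↦ ?_
  have hcompl : Sᶜ.ncard < 3 := ((hS G hG).isClique_compl hd).ncard_lt_of_cliqueFree htf
  have := Set.ncard_add_ncard_compl S
  omega

theorem stmt9_general [Fintype V] (𝒢 : Set (SimpleGraph V))
    (hd : ∀ G ∈ 𝒢, G.diam = 2)
    (htf : ∃ G ∈ 𝒢, G.CliqueFree 3) :
    Fintype.card V - 2 ≤ SdS 𝒢 ∧ SdS 𝒢 ≤ Fintype.card V - 1 := by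
  obtain ⟨G, hG, hG3⟩ := htf
  rw [← Nat.card_eq_fintype_card]
  exact ⟨card_sub_two_le_SdS hG (hd G hG) hG3, SdS_le_card_sub_one 𝒢⟩

theorem stmt9 [Fintype V] (𝒢 : Set (SimpleGraph V)) (hn : 2 ≤ Fintype.card V)
    (hconn : ∀ G ∈ 𝒢, G.Connected) (hd : ∀ G ∈ 𝒢, G.diam = 2)
    (htf : ∃ G ∈ 𝒢, G.CliqueFree 3) :
    Fintype.card V - 2 ≤ SdS 𝒢 ∧ SdS 𝒢 ≤ Fintype.card V - 1 :=
  stmt9_general 𝒢 hd htf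
end

section
/- Let G be a connected graph such that its complement G^c is connected and has diameter 2, and let S be a set of vertices. Then S is a simultaneous strong metric generator for {G, G^c} if and only if S is a strong resolving cover of G. Hence Sd_s(G,G^c) = β_s(G). -/
open SimpleGraph

variable {V : Type*}

/-!
In `Gᶜ` (diameter 2) the pairs that only their own endpoints strongly resolve are the edges of
`G`, which are at distance 2 = diam in `Gᶜ`, and the false twins of `G`. So a strong metric
generator of `Gᶜ` must cover `G`. Conversely, let `S` cover and strongly resolve `G`, and let
`u v` be adjacent in `Gᶜ`. If some `z` is a `G`-neighbour of `u` but not of `v`, then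
`u ∈ S` or `z ∈ S`, and `u, v, z` is a geodesic of `Gᶜ`; symmetrically with `u`, `v` swapped.
Otherwise `u, v` are false twins of `G`, which only `u` and `v` strongly resolve in `G`.
-/

section Distance

variable {G : SimpleGraph V} {u v w : V}

lemma stronglyResolves_left : StronglyResolves G u u v :=
  Or.inr (by simp)

lemma stronglyResolves_right : StronglyResolves G v u v :=
  Or.inl (by simp)

lemma stronglyResolves_comm : StronglyResolves G w u v ↔ StronglyResolves G w v u :=
  Or.comm

lemma StronglyResolves.eq_or_eq_of_dist_eq_diam (hG : G.ediam ≠ ⊤)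
    (huv : G.dist u v = G.diam) (h : StronglyResolves G w u v) : w = u ∨ w = v := by
  have : Nonempty V := ⟨u⟩
  have hconn := connected_of_ediam_ne_top hG
  have hle : ∀ a b, G.dist a b ≤ G.diam := fun _ _ ↦ dist_le_diam hG
  rcases h with h | h
  · have : G.dist v w = 0 := by have := hle u w; omega
    exact Or.inr (hconn.dist_eq_zero_iff.mp this).symm
  · have : G.dist u w = 0 := by have := hle v w; rw [SimpleGraph.dist_comm] at huv; omega
    exact Or.inl (hconn.dist_eq_zero_iff.mp this).symm

lemma SimpleGraph.Reachable.dist_le_of_neighbor_subset (hvw : G.Reachable v w) (hne : v ≠ w)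
    (h : ∀ z, G.Adj v z → G.Adj u z) : G.dist u w ≤ G.dist v w := by
  obtain ⟨p, hp⟩ := hvw.exists_walk_length_eq_dist
  cases p with
  | nil => exact absurd rfl hne
  | cons hadj q => exact hp ▸ dist_le (Walk.cons (h _ hadj) q)

lemma StronglyResolves.eq_or_eq_of_adj_iff (hG : G.Connected) (hne : u ≠ v)
    (htwin : ∀ z, G.Adj u z ↔ G.Adj v z) (h : StronglyResolves G w u v) : w = u ∨ w = v := by
  by_contra! hw
  have hpos := hG.pos_dist_of_ne hne
  rcases h with h | h
  · have := (hG v w).dist_le_of_neighbor_subset hw.2.symm fun z ↦ (htwin z).mpr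
    omega
  · have := (hG u w).dist_le_of_neighbor_subset hw.1.symm fun z ↦ (htwin z).mp
    rw [SimpleGraph.dist_comm] at hpos
    omega

lemma SimpleGraph.dist_eq_two_of_diam_eq_two (hd : G.diam = 2) (hne : u ≠ v)
    (hnadj : ¬G.Adj u v) : G.dist u v = 2 := by
  have : Nonempty V := ⟨u⟩
  have hfin : G.ediam ≠ ⊤ := ediam_ne_top_of_diam_ne_zero (by omega)
  have := (connected_of_ediam_ne_top hfin).one_lt_dist_of_ne_of_not_adj hne hnadj
  have := dist_le_diam hfin (u := u) (v := v)
  omega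

end Distance

section Complement

variable {G : SimpleGraph V} {S : Set V}

lemma isVertexCover_of_isStrongMetricGen_compl (hd : Gᶜ.diam = 2)
    (hS : IsStrongMetricGen Gᶜ S) : _root_.IsVertexCover G S := by
  intro u v huv
  obtain ⟨w, hwS, hw⟩ := hS u v huv.ne
  have hdist : Gᶜ.dist u v = Gᶜ.diam := by
    rw [hd]
    exact dist_eq_two_of_diam_eq_two hd huv.ne fun h ↦ ((compl_adj G u v).mp h).2 huv
  rcases hw.eq_or_eq_of_dist_eq_diam (ediam_ne_top_of_diam_ne_zero (by omega)) hdist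
    with rfl | rfl
  · exact Or.inl hwS
  · exact Or.inr hwS

lemma exists_stronglyResolves_compl_of_adj_of_not_adj (hd : Gᶜ.diam = 2)
    (hcov : _root_.IsVertexCover G S) {u v z : V} (hne : u ≠ v) (huv : ¬G.Adj u v)
    (huz : G.Adj u z) (hvz : ¬G.Adj v z) : ∃ w ∈ S, StronglyResolves Gᶜ w u v := by
  rcases hcov u z huz with hu | hz
  · exact ⟨u, hu, stronglyResolves_left⟩
  · have hvz' : v ≠ z := by rintro rfl; exact huv huz
    refine ⟨z, hz, Or.inl ?_⟩
    rw [dist_eq_two_of_diam_eq_two hd huz.ne fun h ↦ ((compl_adj G u z).mp h).2 huz,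
      dist_eq_one_iff_adj.mpr ((compl_adj G u v).mpr ⟨hne, huv⟩),
      dist_eq_one_iff_adj.mpr ((compl_adj G v z).mpr ⟨hvz', hvz⟩)]

lemma isStrongMetricGen_compl_of_isStrongResCover (hG : G.Connected) (hd : Gᶜ.diam = 2)
    (hS : IsStrongResCover G S) : IsStrongMetricGen Gᶜ S := by
  obtain ⟨hcov, hgen⟩ := hS
  intro u v hne
  by_cases hadj : G.Adj u v
  · rcases hcov u v hadj with hu | hv
    · exact ⟨u, hu, stronglyResolves_left⟩
    · exact ⟨v, hv, stronglyResolves_right⟩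
  by_cases hu : ∃ z, G.Adj u z ∧ ¬G.Adj v z
  · obtain ⟨z, huz, hvz⟩ := hu
    exact exists_stronglyResolves_compl_of_adj_of_not_adj hd hcov hne hadj huz hvz
  by_cases hv : ∃ z, G.Adj v z ∧ ¬G.Adj u z
  · obtain ⟨z, hvz, huz⟩ := hv
    obtain ⟨w, hwS, hw⟩ := exists_stronglyResolves_compl_of_adj_of_not_adj hd hcov hne.symm
      (fun h ↦ hadj h.symm) hvz huz
    exact ⟨w, hwS, stronglyResolves_comm.mp hw⟩
  push Not at hu hv
  obtain ⟨w, hwS, hw⟩ := hgen u v hne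
  rcases hw.eq_or_eq_of_adj_iff hG hne fun z ↦ ⟨hu z, hv z⟩ with rfl | rfl
  · exact ⟨w, hwS, stronglyResolves_left⟩
  · exact ⟨w, hwS, stronglyResolves_right⟩

lemma isStrongMetricGen_and_compl_iff (hG : G.Connected) (hd : Gᶜ.diam = 2) :
    IsStrongMetricGen G S ∧ IsStrongMetricGen Gᶜ S ↔ IsStrongResCover G S :=
  ⟨fun h ↦ ⟨isVertexCover_of_isStrongMetricGen_compl hd h.2, h.1⟩,
    fun h ↦ ⟨h.2, isStrongMetricGen_compl_of_isStrongResCover hG hd h⟩⟩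

end Complement

theorem stmt13_general (G : SimpleGraph V) (hG : G.Connected) (hd : Gᶜ.diam = 2) :
    (∀ S : Set V,
      (IsStrongMetricGen G S ∧ IsStrongMetricGen Gᶜ S) ↔ IsStrongResCover G S) ∧
    SdS {G, Gᶜ} = betaS G := by
  have key := fun S ↦ isStrongMetricGen_and_compl_iff (S := S) hG hd
  refine ⟨key, ?_⟩
  simp only [SdS, betaS, Set.mem_insert_iff, Set.mem_singleton_iff, forall_eq_or_imp, forall_eq,
    key]

theorem stmt13 [Fintype V] (G : SimpleGraph V) (hG : G.Connected) (hGc : Gᶜ.Connected)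
    (hd : Gᶜ.diam = 2) :
    (∀ S : Set V,
      (IsStrongMetricGen G S ∧ IsStrongMetricGen Gᶜ S) ↔ IsStrongResCover G S) ∧
    SdS {G, Gᶜ} = betaS G :=
  stmt13_general G hG hd
end
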